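/- Under the homogeneous Dawid–Skene model with constant assignment probability q, uniform class prior π_k = 1/L, and worker accuracies w_i ∈ (0,1) with w_i ≠ 1/L for at least one i: (a) the oracle MAP rule argmax_{k} P(y_j = k | Z_{1j},…,Z_{Mj}) coincides with weighted majority voting with weights v_i = ln((L−1)·w_i/(1−w_i)); and (b) setting t = (q/((L−1)·‖v‖₂))·Σ_{i=1}^M v_i·(L·w_i − 1), c = ‖v‖_∞/‖v‖₂ and σ² = q, one always has t ≥ 0, and hence without any further condition E[E_N] ≤ (L−1)·min{ exp(−t²/2), exp(−t²/(2·(σ² + c·t/3))) }. -/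

import Mathlib

open MeasureTheory ProbabilityTheory Real

noncomputable section

namespace CrowdHom

/-- Conditional law of `Z i j ∈ Fin (L+1)` (`0` = missing) given the true label `y j = k`
under the homogeneous Dawid–Skene model with constant assignment probability `q` and
worker accuracies `w`. -/
def condLaw {M L : ℕ} (q : ℝ) (w : Fin M → ℝ) (i : Fin M) (k : Fin L)
    (h : Fin (L + 1)) : ℝ :=
  if hz : h = 0 then 1 - q
  else q * (if h.pred hz = k then w i else (1 - w i) / ((L : ℝ) - 1))

/-- The quantity `t` of weighted majority voting under the homogeneous model. -/
def tWMV {M : ℕ} (L : ℕ) (q : ℝ) (w v : Fin M → ℝ) : ℝ :=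
  q / (((L : ℝ) - 1) * Real.sqrt (∑ i, v i ^ 2)) * ∑ i, v i * ((L : ℝ) * w i - 1)

/-- `c = ‖v‖_∞ / ‖v‖₂`. -/
def cConst {M : ℕ} (v : Fin M → ℝ) : ℝ :=
  (sSup {x : ℝ | ∃ i : Fin M, x = |v i|}) / Real.sqrt (∑ i, v i ^ 2)

end CrowdHom

/-!
Given the true label `k`, the workers answer independently with laws `condLaw`, and their product
factorises as a label-free term times `exp (score v h k)` for the log-odds weights `v`. Under the
uniform prior the posterior of `k` is therefore proportional to `exp (score v h k)`, so the MAP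
rule and weighted majority voting agree; and `t ≥ 0` because the log-odds of worker `i` has the
sign of `L w_i - 1`.

For the error bound, `ŷ ≠ y = k` forces `score v h k ≤ score v h l` for some `l ≠ k`, and
`score v h l - score v h k` is a weighted sum of independent `{-1, 0, 1}`-valued votes with total
mean `-t ‖v‖₂` and variances at most `q`. A Chernoff bound, with Hoeffding's lemma or with
Bernstein's estimate `exp x ≤ 1 + x + x² / (2 (1 - |x| / 3))` for the moment generating
functions, bounds each of the `L (L - 1)` pairs `(k, l)` by `(1 / L) · min (…)`.
-/

open Finset

theorem Real.exp_le_one_add_add_sq_div_of_abs_le {x B : ℝ} (hx : |x| ≤ B) (hB : B < 3) :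
    exp x ≤ 1 + x + x ^ 2 / (2 * (1 - B / 3)) := by
  have hB0 : 0 ≤ B := (abs_nonneg x).trans hx
  have htail : HasSum (fun n : ℕ => x ^ (n + 2) / (n + 2).factorial) (exp x - (1 + x)) := by
    have h := (hasSum_nat_add_iff' 2).2
      (exp_eq_exp_ℝ ▸ NormedSpace.expSeries_div_hasSum_exp (𝔸 := ℝ) x)
    simpa [sum_range_succ] using h
  have hgeom : HasSum (fun n : ℕ => x ^ 2 / 2 * (B / 3) ^ n) (x ^ 2 / 2 * (1 - B / 3)⁻¹) :=
    (hasSum_geometric_of_lt_one (by positivity) (by linarith)).mul_left _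
  have hterm (n : ℕ) : x ^ (n + 2) / (n + 2).factorial ≤ x ^ 2 / 2 * (B / 3) ^ n := by
    have hpow : x ^ (n + 2) ≤ x ^ 2 * B ^ n := by
      rw [pow_add, mul_comm]
      exact mul_le_mul_of_nonneg_left
        ((le_abs_self _).trans ((abs_pow x n).trans_le (pow_le_pow_left₀ (abs_nonneg x) hx n)))
        (sq_nonneg x)
    have hfact : (2 * 3 ^ n : ℝ) ≤ (n + 2).factorial := by
      have := Nat.factorial_mul_pow_le_factorial (m := 2) (n := n)
      rw [add_comm 2 n] at this
      exact_mod_cast this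
    calc x ^ (n + 2) / (n + 2).factorial ≤ x ^ 2 * B ^ n / (2 * 3 ^ n) := by gcongr
      _ = x ^ 2 / 2 * (B / 3) ^ n := by rw [div_pow]; ring
  have := hasSum_le hterm htail hgeom
  rw [← div_div, div_eq_mul_inv (x ^ 2 / 2)]
  linarith

theorem sum_mul_exp_le_exp_of_mem_Icc {α : Type*} [Fintype α] {p X : α → ℝ}
    (hp : ∀ z, 0 ≤ p z) (hp1 : ∑ z, p z = 1) {a b : ℝ} (hX : ∀ z, X z ∈ Set.Icc a b) (t : ℝ) :
    ∑ z, p z * exp (t * X z) ≤ exp (t * ∑ z, p z * X z + (b - a) ^ 2 * t ^ 2 / 8) := by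
  let _ : MeasurableSpace α := ⊤
  have hsum : ∑ z, ENNReal.ofReal (p z) = 1 := by
    rw [← ENNReal.ofReal_sum_of_nonneg fun z _ => hp z, hp1, ENNReal.ofReal_one]
  set μ := (PMF.ofFintype _ hsum).toMeasure
  have hint (f : α → ℝ) : ∫ z, f z ∂μ = ∑ z, p z * f z := by
    simp [μ, PMF.integral_eq_sum, ENNReal.toReal_ofReal (hp _)]
  have hH := (hasSubgaussianMGF_of_mem_Icc (μ := μ) (measurable_of_countable X).aemeasurable
    (ae_of_all _ hX)).mgf_le t
  rw [mgf, hint, hint] at hH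
  have hc : (((‖b - a‖₊ / 2) ^ 2 : NNReal) : ℝ) = (b - a) ^ 2 / 4 := by
    simp [div_pow, sq_abs]; norm_num
  have hshift : ∑ z, p z * exp (t * X z)
      = exp (t * ∑ z, p z * X z) * ∑ z, p z * exp (t * (X z - ∑ z, p z * X z)) := by
    rw [mul_sum]
    refine sum_congr rfl fun z _ => ?_
    rw [mul_left_comm, ← exp_add]; ring_nf
  rw [hshift, exp_add]
  refine mul_le_mul_of_nonneg_left (hH.trans_eq ?_) (exp_pos _).le
  rw [hc]; ring_nf

theorem sum_mul_exp_le_exp_of_abs_le_one {α : Type*} [Fintype α] {p X : α → ℝ}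
    (hp : ∀ z, 0 ≤ p z) (hp1 : ∑ z, p z = 1) (hX : ∀ z, |X z| ≤ 1) {σ2 : ℝ}
    (hvar : ∑ z, p z * X z ^ 2 ≤ σ2) {t B : ℝ} (ht : |t| ≤ B) (hB : B < 3) :
    ∑ z, p z * exp (t * X z)
      ≤ exp (t * ∑ z, p z * X z + σ2 * t ^ 2 / (2 * (1 - B / 3))) := by
  have hden : 0 < 2 * (1 - B / 3) := by linarith
  have hpoint (z : α) : exp (t * X z) ≤ 1 + t * X z + (t * X z) ^ 2 / (2 * (1 - B / 3)) := by
    refine Real.exp_le_one_add_add_sq_div_of_abs_le ?_ hB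
    rw [abs_mul]
    exact (mul_le_of_le_one_right (abs_nonneg t) (hX z)).trans ht
  calc ∑ z, p z * exp (t * X z)
      ≤ ∑ z, p z * (1 + t * X z + (t * X z) ^ 2 / (2 * (1 - B / 3))) :=
        sum_le_sum fun z _ => mul_le_mul_of_nonneg_left (hpoint z) (hp z)
    _ = ∑ z, p z + t * ∑ z, p z * X z + (∑ z, p z * X z ^ 2) * t ^ 2 / (2 * (1 - B / 3)) := by
        rw [mul_sum, sum_mul, sum_div, ← sum_add_distrib,
          ← sum_add_distrib]
        exact sum_congr rfl fun z _ => by ring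
    _ = 1 + t * ∑ z, p z * X z + (∑ z, p z * X z ^ 2) * t ^ 2 / (2 * (1 - B / 3)) := by
        rw [hp1]
    _ ≤ 1 + t * ∑ z, p z * X z + σ2 * t ^ 2 / (2 * (1 - B / 3)) := by gcongr
    _ ≤ _ := by linarith [add_one_le_exp (t * ∑ z, p z * X z + σ2 * t ^ 2 / (2 * (1 - B / 3)))]

theorem sum_filter_prod_le_prod_sum_mul_exp {ι α : Type*} [Fintype ι] [DecidableEq ι]
    [Fintype α] {P : ι → α → ℝ} (hP : ∀ i z, 0 ≤ P i z) (g : ι → α → ℝ) {s : ℝ} (hs : 0 ≤ s) :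
    ∑ h ∈ univ.filter (fun h : ι → α => 0 ≤ ∑ i, g i (h i)), ∏ i, P i (h i)
      ≤ ∏ i, ∑ z, P i z * exp (s * g i z) := by
  have hprod (h : ι → α) : 0 ≤ ∏ i, P i (h i) := prod_nonneg fun i _ => hP i (h i)
  rw [prod_univ_sum, Fintype.piFinset_univ]
  calc ∑ h ∈ univ.filter (fun h : ι → α => 0 ≤ ∑ i, g i (h i)), ∏ i, P i (h i)
      ≤ ∑ h ∈ univ.filter (fun h : ι → α => 0 ≤ ∑ i, g i (h i)),
          (∏ i, P i (h i)) * exp (s * ∑ i, g i (h i)) :=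
        sum_le_sum fun h hh => le_mul_of_one_le_right (hprod h)
          (one_le_exp (mul_nonneg hs (mem_filter.1 hh).2))
    _ ≤ ∑ h : ι → α, (∏ i, P i (h i)) * exp (s * ∑ i, g i (h i)) :=
        sum_le_sum_of_subset_of_nonneg (filter_subset _ _)
          fun h _ _ => mul_nonneg (hprod h) (exp_pos _).le
    _ = ∑ h : ι → α, ∏ i, P i (h i) * exp (s * g i (h i)) := by
        simp only [mul_sum, exp_sum, prod_mul_distrib]

section WeightedSumTail

variable {ι α : Type*} [Fintype ι] [DecidableEq ι] [Fintype α] {P X : ι → α → ℝ} {v : ι → ℝ}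

theorem sum_filter_prod_le_exp_of_sum_mul_exp_le (hP : ∀ i z, 0 ≤ P i z) {r K : ℝ}
    (hr : 0 ≤ r) (hmgf : ∀ i, ∑ z, P i z * exp (r * v i * X i z)
      ≤ exp (r * v i * ∑ z, P i z * X i z + K * (r * v i) ^ 2)) :
    ∑ h ∈ univ.filter (fun h : ι → α => 0 ≤ ∑ i, v i * X i (h i)), ∏ i, P i (h i)
      ≤ exp (r * ∑ i, v i * ∑ z, P i z * X i z + K * r ^ 2 * ∑ i, v i ^ 2) := by
  calc _ ≤ ∏ i, ∑ z, P i z * exp (r * (v i * X i z)) :=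
        sum_filter_prod_le_prod_sum_mul_exp hP (fun i z => v i * X i z) hr
    _ ≤ ∏ i, exp (r * v i * ∑ z, P i z * X i z + K * (r * v i) ^ 2) := by
        refine prod_le_prod (fun i _ => sum_nonneg fun z _ => ?_) fun i _ => ?_
        · exact mul_nonneg (hP i z) (exp_pos _).le
        · simpa only [mul_assoc] using hmgf i
    _ = _ := by
        rw [← exp_sum, sum_add_distrib, mul_sum, mul_sum]
        congr 2 <;> exact sum_congr rfl fun i _ => by ring

theorem sum_filter_prod_le_exp_neg_sq_div_two (hP : ∀ i z, 0 ≤ P i z)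
    (hP1 : ∀ i, ∑ z, P i z = 1) (hX : ∀ i z, X i z ∈ Set.Icc (-1) 1) (hv : 0 < ∑ i, v i ^ 2)
    {t : ℝ} (ht : 0 ≤ t) (hmean : ∑ i, v i * ∑ z, P i z * X i z = -(t * √(∑ i, v i ^ 2))) :
    ∑ h ∈ univ.filter (fun h : ι → α => 0 ≤ ∑ i, v i * X i (h i)), ∏ i, P i (h i)
      ≤ exp (-t ^ 2 / 2) := by
  set R := √(∑ i, v i ^ 2)
  have hR : 0 < R := sqrt_pos.2 hv
  have hRS : ∑ i, v i ^ 2 = R ^ 2 := (sq_sqrt hv.le).symm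
  have hmgf (i : ι) := sum_mul_exp_le_exp_of_mem_Icc (hP i) (hP1 i) (hX i) (t / R * v i)
  refine (sum_filter_prod_le_exp_of_sum_mul_exp_le hP (div_nonneg ht hR.le) (K := 1 / 2)
    fun i => (hmgf i).trans_eq ?_).trans_eq ?_
  · ring_nf
  · rw [hmean, hRS]
    congr 1
    field_simp
    ring

theorem sum_filter_prod_le_exp_bernstein (hP : ∀ i z, 0 ≤ P i z)
    (hP1 : ∀ i, ∑ z, P i z = 1) (hX : ∀ i z, |X i z| ≤ 1) {σ2 : ℝ} (hσ2 : 0 < σ2)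
    (hvar : ∀ i, ∑ z, P i z * X i z ^ 2 ≤ σ2) (hv : 0 < ∑ i, v i ^ 2) {c : ℝ}
    (hc : ∀ i, |v i| ≤ c * √(∑ i, v i ^ 2))
    {t : ℝ} (ht : 0 ≤ t) (hmean : ∑ i, v i * ∑ z, P i z * X i z = -(t * √(∑ i, v i ^ 2))) :
    ∑ h ∈ univ.filter (fun h : ι → α => 0 ≤ ∑ i, v i * X i (h i)), ∏ i, P i (h i)
      ≤ exp (-t ^ 2 / (2 * (σ2 + c * t / 3))) := by
  set R := √(∑ i, v i ^ 2)
  have hR : 0 < R := sqrt_pos.2 hv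
  have hRS : ∑ i, v i ^ 2 = R ^ 2 := (sq_sqrt hv.le).symm
  have hc0 : 0 ≤ c := by
    obtain ⟨i, -, hi⟩ := exists_lt_of_sum_lt (f := fun _ => (0 : ℝ)) (by simpa using hv)
    exact nonneg_of_mul_nonneg_left ((abs_nonneg _).trans (hc i)) hR
  have hD : 0 < σ2 + c * t / 3 := by positivity
  -- the Chernoff parameter minimising the Bernstein exponent
  set r := t / (R * (σ2 + c * t / 3))
  have hr : 0 ≤ r := by positivity
  have hB : r * (c * R) < 3 := by
    rw [show r * (c * R) = c * t / (σ2 + c * t / 3) by simp only [r]; field_simp,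
      div_lt_iff₀ hD]
    nlinarith
  have hmgf (i : ι) := sum_mul_exp_le_exp_of_abs_le_one (hP i) (hP1 i) (hX i) (hvar i)
    (t := r * v i) (by rw [abs_mul, abs_of_nonneg hr]; exact mul_le_mul_of_nonneg_left (hc i) hr)
    hB
  refine (sum_filter_prod_le_exp_of_sum_mul_exp_le hP hr
    (K := σ2 / (2 * (1 - r * (c * R) / 3))) fun i => (hmgf i).trans_eq ?_).trans_eq ?_
  · ring_nf
  · have h3 : 1 - r * (c * R) / 3 = σ2 / (σ2 + c * t / 3) := by
      simp only [r]
      field_simp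
      ring
    rw [hmean, hRS, h3]
    congr 1
    simp only [r]
    field_simp
    ring

end WeightedSumTail

namespace CrowdHom

variable {M L : ℕ} {q : ℝ} {w : Fin M → ℝ}

theorem one_le_natCast_sub_one (hL : 2 ≤ L) : (1 : ℝ) ≤ L - 1 := by
  have : (2 : ℝ) ≤ L := by exact_mod_cast hL
  linarith

theorem condLaw_zero (i : Fin M) (k : Fin L) : condLaw q w i k 0 = 1 - q := rfl

theorem condLaw_succ (i : Fin M) (k l : Fin L) :
    condLaw q w i k l.succ = q * (if l = k then w i else (1 - w i) / ((L : ℝ) - 1)) := by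
  simp [condLaw]

theorem condLaw_nonneg (hq0 : 0 ≤ q) (hq1 : q ≤ 1) {i : Fin M} (hw0 : 0 ≤ w i) (hw1 : w i ≤ 1)
    (k : Fin L) (z : Fin (L + 1)) : 0 ≤ condLaw q w i k z := by
  have hL : (1 : ℝ) ≤ L := by exact_mod_cast k.pos
  cases z using Fin.cases with
  | zero => rw [condLaw_zero]; linarith
  | succ l =>
    rw [condLaw_succ]
    split_ifs
    · positivity
    · exact mul_nonneg hq0 (div_nonneg (by linarith) (by linarith))

theorem sum_condLaw (hL : 2 ≤ L) (i : Fin M) (k : Fin L) :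
    ∑ z, condLaw q w i k z = 1 := by
  have hL1 : (L : ℝ) - 1 ≠ 0 := by linarith [one_le_natCast_sub_one hL]
  have hite (l : Fin L) : (if l = k then w i else (1 - w i) / ((L : ℝ) - 1))
      = (1 - w i) / ((L : ℝ) - 1) + if l = k then w i - (1 - w i) / ((L : ℝ) - 1) else 0 := by
    split_ifs <;> ring
  simp only [Fin.sum_univ_succ, condLaw_zero, condLaw_succ, hite, mul_add, sum_add_distrib,
    ← mul_sum, sum_const, card_univ, Fintype.card_fin, nsmul_eq_mul, sum_ite_eq', mem_univ,
    if_true]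
  field_simp
  ring

def voteDiff (k l : Fin L) (z : Fin (L + 1)) : ℝ :=
  (if z = l.succ then 1 else 0) - (if z = k.succ then 1 else 0)

theorem abs_voteDiff_le_one (k l : Fin L) (z : Fin (L + 1)) : |voteDiff k l z| ≤ 1 := by
  unfold voteDiff
  split_ifs <;> norm_num

theorem sum_condLaw_mul_voteDiff {F : ℝ → ℝ} (hF : F 0 = 0) (i : Fin M) {k l : Fin L}
    (hkl : l ≠ k) :
    ∑ z, condLaw q w i k z * F (voteDiff k l z)
      = q * ((1 - w i) / ((L : ℝ) - 1)) * F 1 + q * w i * F (-1) := by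
  have hne : l.succ ≠ k.succ := fun h => hkl (Fin.succ_injective _ h)
  rw [Fintype.sum_eq_add l.succ k.succ hne]
  · simp [voteDiff, condLaw_succ, hkl, hne, hne.symm]
  · rintro z ⟨hzl, hzk⟩
    simp [voteDiff, hzl, hzk, hF]

def score (v : Fin M → ℝ) (h : Fin M → Fin (L + 1)) (k : Fin L) : ℝ :=
  ∑ i, v i * (if h i = k.succ then 1 else 0)

theorem score_sub_score (v : Fin M → ℝ) (h : Fin M → Fin (L + 1)) (k l : Fin L) :
    score v h l - score v h k = ∑ i, v i * voteDiff k l (h i) := by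
  simp only [score, voteDiff, ← sum_sub_distrib, mul_sub]

theorem sum_condLaw_mul_voteDiff_eq (i : Fin M) {k l : Fin L} (hkl : l ≠ k) :
    ∑ z, condLaw q w i k z * voteDiff k l z
      = q * ((1 - w i) / ((L : ℝ) - 1)) - q * w i := by
  simpa [sub_eq_add_neg] using sum_condLaw_mul_voteDiff (F := id) rfl i hkl

theorem sum_condLaw_mul_voteDiff_sq_le (hL : 2 ≤ L) (hq0 : 0 ≤ q) {i : Fin M} (hw1 : w i ≤ 1)
    {k l : Fin L} (hkl : l ≠ k) :
    ∑ z, condLaw q w i k z * voteDiff k l z ^ 2 ≤ q := by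
  rw [sum_condLaw_mul_voteDiff (F := (· ^ 2)) (by norm_num) i hkl]
  have : (1 - w i) / ((L : ℝ) - 1) ≤ 1 - w i :=
    div_le_self (by linarith) (one_le_natCast_sub_one hL)
  nlinarith

theorem tWMV_mul_sqrt (v : Fin M → ℝ) (hv : 0 < ∑ i, v i ^ 2) :
    tWMV L q w v * √(∑ i, v i ^ 2) = q / ((L : ℝ) - 1) * ∑ i, v i * ((L : ℝ) * w i - 1) := by
  rw [tWMV]
  field_simp

theorem abs_le_cConst_mul_sqrt {v : Fin M → ℝ} (hv : 0 < ∑ i, v i ^ 2) (i : Fin M) :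
    |v i| ≤ cConst v * √(∑ i, v i ^ 2) := by
  rw [cConst, div_mul_cancel₀ _ (sqrt_pos.2 hv).ne']
  refine le_csSup (Set.Finite.bddAbove ?_) ⟨i, rfl⟩
  exact (Set.finite_range fun i => |v i|).subset fun x ⟨j, hj⟩ => ⟨j, hj.symm⟩

theorem sum_filter_score_le_prod_condLaw_le (hL : 2 ≤ L) (hq0 : 0 < q) (hq1 : q ≤ 1)
    (hw0 : ∀ i, 0 ≤ w i) (hw1 : ∀ i, w i ≤ 1) {v : Fin M → ℝ} (hv : 0 < ∑ i, v i ^ 2)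
    (ht : 0 ≤ tWMV L q w v) {k l : Fin L} (hkl : l ≠ k) :
    ∑ h ∈ univ.filter (fun h : Fin M → Fin (L + 1) => score v h k ≤ score v h l),
        ∏ i, condLaw q w i k (h i)
      ≤ min (exp (-tWMV L q w v ^ 2 / 2))
          (exp (-tWMV L q w v ^ 2 / (2 * (q + cConst v * tWMV L q w v / 3)))) := by
  have hfilter : univ.filter (fun h : Fin M → Fin (L + 1) => score v h k ≤ score v h l)
      = univ.filter (fun h => 0 ≤ ∑ i, v i * voteDiff k l (h i)) := by
    simp only [← score_sub_score, sub_nonneg]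
  have hP (i : Fin M) := condLaw_nonneg hq0.le hq1 (hw0 i) (hw1 i) k
  have hmean : ∑ i, v i * ∑ z, condLaw q w i k z * voteDiff k l z
      = -(tWMV L q w v * √(∑ i, v i ^ 2)) := by
    have hL1 : (L : ℝ) - 1 ≠ 0 := by linarith [one_le_natCast_sub_one hL]
    simp only [sum_condLaw_mul_voteDiff_eq _ hkl, tWMV_mul_sqrt v hv, mul_sum, ← sum_neg_distrib]
    refine sum_congr rfl fun i _ => ?_
    field_simp
    ring
  rw [hfilter]
  refine le_min ?_ ?_
  · exact sum_filter_prod_le_exp_neg_sq_div_two hP (fun i => sum_condLaw hL i k)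
      (fun i z => abs_le.1 (abs_voteDiff_le_one k l z)) hv ht hmean
  · exact sum_filter_prod_le_exp_bernstein hP (fun i => sum_condLaw hL i k)
      (fun i => abs_voteDiff_le_one k l) hq0
      (fun i => sum_condLaw_mul_voteDiff_sq_le hL hq0.le (hw1 i) hkl) hv
      (abs_le_cConst_mul_sqrt hv) ht hmean

def logOddsWeight (L : ℕ) (w : Fin M → ℝ) (i : Fin M) : ℝ :=
  Real.log (((L : ℝ) - 1) * w i / (1 - w i))

section Odds

variable {p : ℝ}

theorem odds_pos (hL : 2 ≤ L) (hp0 : 0 < p) (hp1 : p < 1) :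
    0 < ((L : ℝ) - 1) * p / (1 - p) :=
  div_pos (mul_pos (by linarith [one_le_natCast_sub_one hL]) hp0) (by linarith)

theorem odds_sub_one (hp1 : p < 1) :
    ((L : ℝ) - 1) * p / (1 - p) - 1 = ((L : ℝ) * p - 1) / (1 - p) := by
  field_simp [(sub_pos.2 hp1).ne']
  ring

theorem log_odds_mul_nonneg (hL : 2 ≤ L) (hp0 : 0 < p) (hp1 : p < 1) :
    0 ≤ Real.log (((L : ℝ) - 1) * p / (1 - p)) * ((L : ℝ) * p - 1) := by
  have hodds := odds_sub_one (L := L) hp1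
  have h1p : 0 < 1 - p := by linarith
  rcases le_total 1 ((L : ℝ) * p) with h | h
  · refine mul_nonneg (log_nonneg ?_) (by linarith)
    linarith [div_nonneg (sub_nonneg.2 h) h1p.le]
  · refine mul_nonneg_of_nonpos_of_nonpos (log_nonpos (odds_pos hL hp0 hp1).le ?_) (by linarith)
    linarith [div_nonpos_of_nonpos_of_nonneg (sub_nonpos.2 h) h1p.le]

theorem log_odds_ne_zero (hL : 2 ≤ L) (hp0 : 0 < p) (hp1 : p < 1) (hne : p ≠ 1 / (L : ℝ)) :
    Real.log (((L : ℝ) - 1) * p / (1 - p)) ≠ 0 := by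
  refine log_ne_zero_of_pos_of_ne_one (odds_pos hL hp0 hp1) fun h => hne ?_
  have hL0 : (L : ℝ) ≠ 0 := by positivity
  have := odds_sub_one (L := L) hp1
  rw [h, sub_self, eq_comm, div_eq_zero_iff] at this
  rcases this with h' | h'
  · field_simp; linarith
  · linarith

end Odds

theorem tWMV_logOddsWeight_nonneg (hL : 2 ≤ L) (hq0 : 0 ≤ q) (hw0 : ∀ i, 0 < w i)
    (hw1 : ∀ i, w i < 1) : 0 ≤ tWMV L q w (logOddsWeight L w) := by
  refine mul_nonneg
    (div_nonneg hq0 (mul_nonneg (by linarith [one_le_natCast_sub_one hL]) (sqrt_nonneg _)))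
    (sum_nonneg fun i _ => log_odds_mul_nonneg hL (hw0 i) (hw1 i))

theorem prod_condLaw_eq_mul_exp_score (hL : 2 ≤ L) (hw0 : ∀ i, 0 < w i) (hw1 : ∀ i, w i < 1)
    (k : Fin L) (h : Fin M → Fin (L + 1)) :
    ∏ i, condLaw q w i k (h i)
      = (∏ i, if h i = 0 then 1 - q else q * ((1 - w i) / ((L : ℝ) - 1)))
        * exp (score (logOddsWeight L w) h k) := by
  rw [score, exp_sum, ← prod_mul_distrib]
  refine prod_congr rfl fun i _ => ?_
  cases h i using Fin.cases with
  | zero => simp [condLaw_zero, (Fin.succ_ne_zero k).symm]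
  | succ m =>
    by_cases hm : m = k
    · subst hm
      have hL1 : (L : ℝ) - 1 ≠ 0 := by linarith [one_le_natCast_sub_one hL]
      have h1w : 1 - w i ≠ 0 := (sub_pos.2 (hw1 i)).ne'
      simp only [condLaw_succ, if_true, Fin.succ_ne_zero, if_false, mul_one, logOddsWeight,
        exp_log (odds_pos hL (hw0 i) (hw1 i))]
      field_simp
    · simp [condLaw_succ, hm]

section Item

variable {Ω : Type*} [MeasurableSpace Ω] {μ : Measure Ω} [IsFiniteMeasure μ]
  {y : Ω → Fin L} {Z : Fin M → Ω → Fin (L + 1)}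

theorem posterior_le_iff_score_le (hL : 2 ≤ L) (hw0 : ∀ i, 0 < w i) (hw1 : ∀ i, w i < 1)
    (hlaw : ∀ (k : Fin L) (h : Fin M → Fin (L + 1)),
      (μ {ω | y ω = k ∧ ∀ i, Z i ω = h i}).toReal = (1 / (L : ℝ)) * ∏ i, condLaw q w i k (h i))
    {h : Fin M → Fin (L + 1)} (hpos : 0 < μ {ω | ∀ i, Z i ω = h i}) (k : Fin L) :
    (∀ l : Fin L,
      (μ {ω | y ω = l ∧ ∀ i, Z i ω = h i}).toReal / (μ {ω | ∀ i, Z i ω = h i}).toReal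
        ≤ (μ {ω | y ω = k ∧ ∀ i, Z i ω = h i}).toReal / (μ {ω | ∀ i, Z i ω = h i}).toReal)
      ↔ ∀ l : Fin L, score (logOddsWeight L w) h l ≤ score (logOddsWeight L w) h k := by
  set C := 1 / (L : ℝ) * ∏ i, if h i = 0 then 1 - q else q * ((1 - w i) / ((L : ℝ) - 1))
  have hjoint (l : Fin L) : (μ {ω | y ω = l ∧ ∀ i, Z i ω = h i}).toReal
      = C * exp (score (logOddsWeight L w) h l) := by
    rw [hlaw, prod_condLaw_eq_mul_exp_score hL hw0 hw1, mul_assoc]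
  have hD : 0 < (μ {ω | ∀ i, Z i ω = h i}).toReal :=
    ENNReal.toReal_pos hpos.ne' (measure_ne_top _ _)
  -- `C` vanishes when `q = 1` and some `h i = 0`; then `{Z = h}` would be null
  have hC : 0 < C := by
    have hcover : (μ {ω | ∀ i, Z i ω = h i}).toReal
        ≤ C * ∑ l, exp (score (logOddsWeight L w) h l) := by
      calc μ.real {ω | ∀ i, Z i ω = h i}
          ≤ μ.real (⋃ l, {ω | y ω = l ∧ ∀ i, Z i ω = h i}) :=
            measureReal_mono fun ω hω => Set.mem_iUnion.2 ⟨y ω, rfl, hω⟩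
        _ ≤ ∑ l, μ.real {ω | y ω = l ∧ ∀ i, Z i ω = h i} := measureReal_iUnion_fintype_le _
        _ = C * ∑ l, exp (score (logOddsWeight L w) h l) := by
            simp only [measureReal_def, hjoint, mul_sum]
    exact (pos_iff_pos_of_mul_pos (hD.trans_le hcover)).2 (sum_pos (fun l _ => exp_pos _)
      (univ_nonempty_iff.2 ⟨k⟩))
  simp only [hjoint, div_le_div_iff_of_pos_right hD, mul_le_mul_iff_of_pos_left hC, exp_le_exp]

theorem wmv_error_prob_le (hL : 2 ≤ L) (hq0 : 0 < q) (hq1 : q ≤ 1) (hw0 : ∀ i, 0 ≤ w i)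
    (hw1 : ∀ i, w i ≤ 1)
    (hlaw : ∀ (k : Fin L) (h : Fin M → Fin (L + 1)),
      (μ {ω | y ω = k ∧ ∀ i, Z i ω = h i}).toReal = (1 / (L : ℝ)) * ∏ i, condLaw q w i k (h i))
    {v : Fin M → ℝ} (hv : 0 < ∑ i, v i ^ 2) (ht : 0 ≤ tWMV L q w v) {yhat : Ω → Fin L}
    (hyhat : ∀ ω k, score v (fun i => Z i ω) k ≤ score v (fun i => Z i ω) (yhat ω)) :
    (μ {ω | yhat ω ≠ y ω}).toReal
      ≤ ((L : ℝ) - 1) * min (exp (-tWMV L q w v ^ 2 / 2))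
          (exp (-tWMV L q w v ^ 2 / (2 * (q + cConst v * tWMV L q w v / 3)))) := by
  set B := min (exp (-tWMV L q w v ^ 2 / 2))
    (exp (-tWMV L q w v ^ 2 / (2 * (q + cConst v * tWMV L q w v / 3))))
  set A : Fin L → Fin L → Set Ω := fun k l =>
    {ω | y ω = k ∧ score v (fun i => Z i ω) k ≤ score v (fun i => Z i ω) l}
  have hpair (k l : Fin L) (hkl : l ≠ k) : μ.real (A k l) ≤ 1 / (L : ℝ) * B :=
    calc μ.real (A k l)
        ≤ μ.real (⋃ h ∈ univ.filter (fun h : Fin M → Fin (L + 1) => score v h k ≤ score v h l),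
            {ω | y ω = k ∧ ∀ i, Z i ω = h i}) :=
          measureReal_mono (fun ω ⟨hy, hs⟩ => Set.mem_iUnion₂.2
            ⟨fun i => Z i ω, mem_filter.2 ⟨mem_univ _, hs⟩, hy, fun i => rfl⟩) (measure_ne_top _ _)
      _ ≤ ∑ h ∈ univ.filter (fun h : Fin M → Fin (L + 1) => score v h k ≤ score v h l),
            μ.real {ω | y ω = k ∧ ∀ i, Z i ω = h i} := measureReal_biUnion_finset_le _ _
      _ = 1 / (L : ℝ) * ∑ h ∈ univ.filter
            (fun h : Fin M → Fin (L + 1) => score v h k ≤ score v h l),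
            ∏ i, condLaw q w i k (h i) := by
          rw [mul_sum]
          exact sum_congr rfl fun h _ => hlaw k h
      _ ≤ 1 / (L : ℝ) * B := by
          gcongr
          exact sum_filter_score_le_prod_condLaw_le hL hq0 hq1 hw0 hw1 hv ht hkl
  have hcover : {ω | yhat ω ≠ y ω} ⊆ ⋃ k, ⋃ l ∈ univ.erase k, A k l := fun ω hω =>
    Set.mem_iUnion.2 ⟨y ω, Set.mem_iUnion₂.2
      ⟨yhat ω, mem_erase.2 ⟨hω, mem_univ _⟩, rfl, hyhat ω (y ω)⟩⟩
  have hL0 : (L : ℝ) ≠ 0 := by positivity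
  calc μ.real {ω | yhat ω ≠ y ω}
      ≤ ∑ k, ∑ l ∈ univ.erase k, μ.real (A k l) :=
        (measureReal_mono hcover).trans <| (measureReal_iUnion_fintype_le _).trans <|
          sum_le_sum fun k _ => measureReal_biUnion_finset_le _ _
    _ ≤ ∑ k : Fin L, ∑ _l ∈ univ.erase k, 1 / (L : ℝ) * B :=
        sum_le_sum fun k _ => sum_le_sum fun l hl => hpair k l (mem_erase.1 hl).1
    _ = ((L : ℝ) - 1) * B := by
        simp only [sum_const, card_erase_of_mem (mem_univ _), card_univ, Fintype.card_fin,
          nsmul_eq_mul, Nat.cast_pred (by omega : 0 < L)]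
        field_simp

end Item

end CrowdHom

theorem oracle_map_hds_is_wmv_and_bound_general
    {Ω : Type*} [MeasurableSpace Ω] (μ : Measure Ω) [IsProbabilityMeasure μ]
    {M N L : ℕ} (hN : 0 < N) (hL : 2 ≤ L)
    (y : Fin N → Ω → Fin L) (Z : Fin M → Fin N → Ω → Fin (L + 1))
    (q : ℝ) (w : Fin M → ℝ)
    (hq0 : 0 < q) (hq1 : q ≤ 1)
    (hw0 : ∀ i, 0 < w i) (hw1 : ∀ i, w i < 1)
    (hwne : ∃ i, w i ≠ 1 / (L : ℝ))
    (hlaw : ∀ (j : Fin N) (k : Fin L) (h : Fin M → Fin (L + 1)),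
      (μ {ω | y j ω = k ∧ ∀ i, Z i j ω = h i}).toReal
        = (1 / (L : ℝ)) * ∏ i, CrowdHom.condLaw q w i k (h i))
    (yhat : Fin N → Ω → Fin L)
    (hyhat : ∀ (j : Fin N) (ω : Ω) (k : Fin L),
      (∑ i, Real.log (((L : ℝ) - 1) * w i / (1 - w i))
          * (if Z i j ω = k.succ then (1 : ℝ) else 0))
        ≤ ∑ i, Real.log (((L : ℝ) - 1) * w i / (1 - w i))
            * (if Z i j ω = (yhat j ω).succ then (1 : ℝ) else 0)) :
    (∀ (j : Fin N) (h : Fin M → Fin (L + 1)),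
      0 < μ {ω | ∀ i, Z i j ω = h i} →
      ∀ k : Fin L,
        ((∀ l : Fin L,
            (μ {ω | y j ω = l ∧ ∀ i, Z i j ω = h i}).toReal
                / (μ {ω | ∀ i, Z i j ω = h i}).toReal
              ≤ (μ {ω | y j ω = k ∧ ∀ i, Z i j ω = h i}).toReal
                / (μ {ω | ∀ i, Z i j ω = h i}).toReal)
          ↔ (∀ l : Fin L,
            (∑ i, Real.log (((L : ℝ) - 1) * w i / (1 - w i))
                * (if h i = l.succ then (1 : ℝ) else 0))
              ≤ ∑ i, Real.log (((L : ℝ) - 1) * w i / (1 - w i))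
                  * (if h i = k.succ then (1 : ℝ) else 0))))
    ∧ 0 ≤ CrowdHom.tWMV L q w (fun i => Real.log (((L : ℝ) - 1) * w i / (1 - w i)))
    ∧ (N : ℝ)⁻¹ * ∑ j, (μ {ω | yhat j ω ≠ y j ω}).toReal
        ≤ ((L : ℝ) - 1) * min
            (Real.exp
              (-(CrowdHom.tWMV L q w
                  (fun i => Real.log (((L : ℝ) - 1) * w i / (1 - w i)))) ^ 2 / 2))
            (Real.exp
              (-(CrowdHom.tWMV L q w
                  (fun i => Real.log (((L : ℝ) - 1) * w i / (1 - w i)))) ^ 2 /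
                (2 * (q + CrowdHom.cConst
                    (fun i => Real.log (((L : ℝ) - 1) * w i / (1 - w i)))
                  * CrowdHom.tWMV L q w
                    (fun i => Real.log (((L : ℝ) - 1) * w i / (1 - w i))) / 3)))) := by
  have ht := CrowdHom.tWMV_logOddsWeight_nonneg hL hq0.le hw0 hw1
  have hv : 0 < ∑ i, CrowdHom.logOddsWeight L w i ^ 2 := by
    obtain ⟨i, hi⟩ := hwne
    have := CrowdHom.log_odds_ne_zero hL (hw0 i) (hw1 i) hi
    exact sum_pos' (fun i _ => sq_nonneg _) ⟨i, mem_univ _, by positivity⟩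
  refine ⟨fun j h hpos k => CrowdHom.posterior_le_iff_score_le hL hw0 hw1 (hlaw j) hpos k, ht, ?_⟩
  have herr (j : Fin N) := CrowdHom.wmv_error_prob_le hL hq0 hq1 (fun i => (hw0 i).le)
    (fun i => (hw1 i).le) (hlaw j) hv ht (hyhat j)
  have hsum := sum_le_card_nsmul univ _ _ fun j _ => herr j
  rw [card_univ, Fintype.card_fin, nsmul_eq_mul] at hsum
  exact (mul_le_mul_of_nonneg_left hsum (by positivity)).trans_eq
    (inv_mul_cancel_left₀ (by positivity) _)

/-- Under the homogeneous Dawid–Skene model with constant assignment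
probability `q`, uniform class prior `π_k = 1/L`, and worker accuracies `w_i ∈ (0,1)` with
`w_i ≠ 1/L` for at least one `i`: (a) the oracle MAP rule coincides with weighted majority
voting with weights `v_i = ln((L−1)w_i/(1−w_i))`; and (b) with
`t = (q/((L−1)‖v‖₂))·Σ_i v_i(L w_i − 1)`, `c = ‖v‖_∞/‖v‖₂`, `σ² = q`, one always has
`t ≥ 0` and hence `E[E_N] ≤ (L−1)·min{exp(−t²/2), exp(−t²/(2(σ² + c t/3)))}`. -/
theorem oracle_map_hds_is_wmv_and_bound
    {Ω : Type*} [MeasurableSpace Ω] (μ : Measure Ω) [IsProbabilityMeasure μ]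
    {M N L : ℕ} (hM : 0 < M) (hN : 0 < N) (hL : 2 ≤ L)
    (y : Fin N → Ω → Fin L) (Z : Fin M → Fin N → Ω → Fin (L + 1))
    (hym : ∀ j, Measurable (y j)) (hZm : ∀ i j, Measurable (Z i j))
    (q : ℝ) (w : Fin M → ℝ)
    (hq0 : 0 < q) (hq1 : q ≤ 1)
    (hw0 : ∀ i, 0 < w i) (hw1 : ∀ i, w i < 1)
    (hwne : ∃ i, w i ≠ 1 / (L : ℝ))
    (hprior : ∀ (j : Fin N) (k : Fin L), (μ {ω | y j ω = k}).toReal = 1 / (L : ℝ))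
    (hlaw : ∀ (j : Fin N) (k : Fin L) (h : Fin M → Fin (L + 1)),
      (μ {ω | y j ω = k ∧ ∀ i, Z i j ω = h i}).toReal
        = (1 / (L : ℝ)) * ∏ i, CrowdHom.condLaw q w i k (h i))
    (hindep : iIndepFun (fun j ω => (y j ω, fun i => Z i j ω)) μ)
    (yhat : Fin N → Ω → Fin L) (hyhatm : ∀ j, Measurable (yhat j))
    (hyhat : ∀ (j : Fin N) (ω : Ω) (k : Fin L),
      (∑ i, Real.log (((L : ℝ) - 1) * w i / (1 - w i))
          * (if Z i j ω = k.succ then (1 : ℝ) else 0))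
        ≤ ∑ i, Real.log (((L : ℝ) - 1) * w i / (1 - w i))
            * (if Z i j ω = (yhat j ω).succ then (1 : ℝ) else 0)) :
    (∀ (j : Fin N) (h : Fin M → Fin (L + 1)),
      0 < μ {ω | ∀ i, Z i j ω = h i} →
      ∀ k : Fin L,
        ((∀ l : Fin L,
            (μ {ω | y j ω = l ∧ ∀ i, Z i j ω = h i}).toReal
                / (μ {ω | ∀ i, Z i j ω = h i}).toReal
              ≤ (μ {ω | y j ω = k ∧ ∀ i, Z i j ω = h i}).toReal
                / (μ {ω | ∀ i, Z i j ω = h i}).toReal)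
          ↔ (∀ l : Fin L,
            (∑ i, Real.log (((L : ℝ) - 1) * w i / (1 - w i))
                * (if h i = l.succ then (1 : ℝ) else 0))
              ≤ ∑ i, Real.log (((L : ℝ) - 1) * w i / (1 - w i))
                  * (if h i = k.succ then (1 : ℝ) else 0))))
    ∧ 0 ≤ CrowdHom.tWMV L q w (fun i => Real.log (((L : ℝ) - 1) * w i / (1 - w i)))
    ∧ (N : ℝ)⁻¹ * ∑ j, (μ {ω | yhat j ω ≠ y j ω}).toReal
        ≤ ((L : ℝ) - 1) * min
            (Real.exp
              (-(CrowdHom.tWMV L q w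
                  (fun i => Real.log (((L : ℝ) - 1) * w i / (1 - w i)))) ^ 2 / 2))
            (Real.exp
              (-(CrowdHom.tWMV L q w
                  (fun i => Real.log (((L : ℝ) - 1) * w i / (1 - w i)))) ^ 2 /
                (2 * (q + CrowdHom.cConst
                    (fun i => Real.log (((L : ℝ) - 1) * w i / (1 - w i)))
                  * CrowdHom.tWMV L q w
                    (fun i => Real.log (((L : ℝ) - 1) * w i / (1 - w i))) / 3)))) :=
  oracle_map_hds_is_wmv_and_bound_general μ hN hL y Z q w hq0 hq1 hw0 hw1 hwne hlaw yhat hyhat
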